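/- arXiv:1111.7118 — 3 statements merged into one kernel-verified Lean document; each statement's English description precedes it below -/
import Mathlib

section
/- Let D ⊆ ℂⁿ be a bounded domain, let p ∈ D, and let G be a compact topological group acting continuously on D so that each g ∈ G acts as a biholomorphic automorphism of D fixing p. Then there exist a G-invariant open neighborhood U ⊆ D of p and a biholomorphism ψ from U onto an open subset of ℂⁿ with ψ(p) = 0 such that ψ(g·q) = (dg_p)(ψ(q) ) for all g ∈ G and all q ∈ U, where dg_p ∈ GL(n,ℂ) denotes the complex (Fréchet) derivative at p of the action of g. In particular, in these coordinates the action of G is linear. -/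
/-!
Bochner–Cartan averaging. For the normalized Haar measure `μ` on `G`, the map
`ψ q = ∫ dg_p (g⁻¹ • q - p) dμ(g)` satisfies `ψ (h • q) = dh_p (ψ q)` by left invariance
of `μ`, and `dψ_p = ∫ dg_p ∘ d(g⁻¹)_p dμ = id`, so `ψ` is a biholomorphism near `p` by the
inverse function theorem. The points whose whole orbit stays in that neighbourhood form an
invariant set, open because `G` is compact. Differentiating under the integral and the inverse
function theorem both need continuity of derivatives, which Schwarz's lemma provides for
holomorphic maps, locally uniformly in continuous parameters.
-/

open Set Metric Filter Topology

section FDerivContinuity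

variable {E F : Type*} [NormedAddCommGroup E] [NormedSpace ℂ E] [ProperSpace E]
  [NormedAddCommGroup F] [NormedSpace ℂ F]

theorem continuousAt_fderiv_of_continuousOn_uncurry {X : Type*} [TopologicalSpace X]
    {f : X → E → F} {U : Set X} {a₀ : X} {x : E} {s : ℝ} (hs : 0 < s) (hU : U ∈ 𝓝 a₀)
    (hf : ContinuousOn ↿f (U ×ˢ closedBall x s))
    (hfd : ∀ a ∈ U, DifferentiableOn ℂ (f a) (ball x s)) :
    ContinuousAt (fun a => fderiv ℂ (f a) x) a₀ := by
  rw [Metric.continuousAt_iff']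
  intro ε hε
  obtain ⟨V, hV, hclose⟩ := (isCompact_closedBall x s).mem_uniformity_of_prod hf
    (mem_of_mem_nhds hU) (dist_mem_uniformity (by positivity : 0 < ε * s / 4))
  rw [nhdsWithin_eq_nhds.mpr hU] at hV
  filter_upwards [hV, hU] with a haV haU
  have hd : DifferentiableOn ℂ (f a - f a₀) (ball x s) :=
    (hfd a haU).sub (hfd a₀ (mem_of_mem_nhds hU))
  -- Schwarz's lemma bounds the derivative of `f a - f a₀` by its oscillation on the ball.
  have hmaps : MapsTo (f a - f a₀) (ball x s) (closedBall ((f a - f a₀) x) (ε * s / 2)) := by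
    intro y hy
    have hy' := hclose a haV y (ball_subset_closedBall hy)
    have hx' := hclose a haV x (mem_closedBall_self hs.le)
    rw [mem_closedBall, dist_eq_norm]
    rw [mem_ofPred_eq, dist_eq_norm] at hy' hx'
    calc ‖(f a - f a₀) y - (f a - f a₀) x‖ ≤ ‖f a y - f a₀ y‖ + ‖f a x - f a₀ x‖ := by
          simpa using norm_sub_le (f a y - f a₀ y) (f a x - f a₀ x)
      _ ≤ ε * s / 2 := by linarith
  have hxs : ball x s ∈ 𝓝 x := ball_mem_nhds x hs
  rw [dist_eq_norm, ← fderiv_sub ((hfd a haU).differentiableAt hxs)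
    ((hfd a₀ (mem_of_mem_nhds hU)).differentiableAt hxs)]
  calc ‖fderiv ℂ (f a - f a₀) x‖ ≤ ε * s / 2 / s :=
        Complex.norm_fderiv_le_div_of_mapsTo_ball hd hmaps hs
    _ < ε := by field_simp; linarith

theorem continuousOn_fderiv_of_continuousOn_uncurry {X : Type*} [TopologicalSpace X]
    {f : X → E → F} {U : Set X} {D : Set E} (hU : IsOpen U) (hD : IsOpen D)
    (hf : ContinuousOn ↿f (U ×ˢ D)) (hfd : ∀ a ∈ U, DifferentiableOn ℂ (f a) D) :
    ContinuousOn (fun z : X × E => fderiv ℂ (f z.1) z.2) (U ×ˢ D) := by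
  rintro ⟨a₀, x₀⟩ ⟨ha₀, hx₀⟩
  obtain ⟨ε, hε, hεD⟩ := nhds_basis_closedBall.mem_iff.mp (hD.mem_nhds hx₀)
  have hmem : ∀ z ∈ U ×ˢ ball x₀ (ε / 2), ∀ y ∈ closedBall (0 : E) (ε / 2), z.2 + y ∈ D := by
    rintro ⟨a, x⟩ ⟨-, hx⟩ y hy
    refine hεD (mem_closedBall.mpr ?_)
    rw [mem_ball] at hx
    rw [mem_closedBall_zero_iff] at hy
    calc dist (x + y) x₀ ≤ dist x x₀ + ‖y‖ := by
          simpa [dist_eq_norm, add_sub_right_comm] using norm_add_le (x - x₀) y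
      _ ≤ ε := by linarith
  -- Translate so that the centre of differentiation is fixed.
  have hcont : ContinuousOn (fun w : (X × E) × E => f w.1.1 (w.1.2 + w.2))
      ((U ×ˢ ball x₀ (ε / 2)) ×ˢ closedBall 0 (ε / 2)) :=
    hf.comp (Continuous.continuousOn (by fun_prop :
      Continuous fun w : (X × E) × E => (w.1.1, w.1.2 + w.2)))
      fun w hw => ⟨hw.1.1, hmem w.1 hw.1 w.2 hw.2⟩
  have key := continuousAt_fderiv_of_continuousOn_uncurry
    (f := fun (z : X × E) (y : E) => f z.1 (z.2 + y)) (x := 0)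
    (half_pos hε) (prod_mem_nhds (hU.mem_nhds ha₀) (ball_mem_nhds x₀ (half_pos hε))) hcont
    (fun z hz => (hfd z.1 hz.1).comp (by fun_prop)
      fun y hy => hmem z hz y (ball_subset_closedBall hy))
  simp only [fderiv_comp_add_left, add_zero] at key
  exact key.continuousWithinAt

theorem DifferentiableOn.continuousOn_fderiv_of_isOpen {f : E → F} {D : Set E}
    (hf : DifferentiableOn ℂ f D) (hD : IsOpen D) : ContinuousOn (fderiv ℂ f) D := by
  have h := continuousOn_fderiv_of_continuousOn_uncurry (f := fun (_ : Unit) => f)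
    isOpen_univ hD (hf.continuousOn.comp continuousOn_snd fun z hz => hz.2) fun _ _ => hf
  exact h.comp (continuous_const.prodMk continuous_id).continuousOn
    fun x hx => ⟨mem_univ (), hx⟩

end FDerivContinuity

section Biholomorphic

variable {E F : Type*} [NormedAddCommGroup E] [NormedSpace ℂ E]
  [NormedAddCommGroup F] [NormedSpace ℂ F]

def IsBiholomorphicOn (f : E → F) (U : Set E) : Prop :=
  DifferentiableOn ℂ f U ∧ InjOn f U ∧ IsOpen (f '' U) ∧
    ∃ φ : F → E, DifferentiableOn ℂ φ (f '' U) ∧ ∀ z ∈ U, φ (f z) = z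

theorem IsBiholomorphicOn.mono {f : E → F} {S U : Set E} (hf : IsBiholomorphicOn f S)
    (hU : IsOpen U) (hUS : U ⊆ S) : IsBiholomorphicOn f U := by
  obtain ⟨hd, hinj, hopen, φ, hφ, hleft⟩ := hf
  have himage : f '' U = f '' S ∩ φ ⁻¹' U := by
    ext y
    constructor
    · rintro ⟨z, hz, rfl⟩
      exact ⟨mem_image_of_mem f (hUS hz), by rwa [mem_preimage, hleft z (hUS hz)]⟩
    · rintro ⟨⟨z, hz, rfl⟩, hφz⟩
      rw [mem_preimage, hleft z hz] at hφz
      exact mem_image_of_mem f hφz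
  refine ⟨hd.mono hUS, hinj.mono hUS, ?_, φ, hφ.mono (image_mono hUS),
    fun z hz => hleft z (hUS hz)⟩
  rw [himage]
  exact hφ.continuousOn.isOpen_inter_preimage hopen hU

theorem DifferentiableOn.exists_isBiholomorphicOn [ProperSpace E] [CompleteSpace F]
    {f : E → F} {s : Set E} {a : E} {e : E ≃L[ℂ] F} (hf : DifferentiableOn ℂ f s)
    (hs : IsOpen s) (ha : a ∈ s) (he : fderiv ℂ f a = e) :
    ∃ S ⊆ s, IsOpen S ∧ a ∈ S ∧ IsBiholomorphicOn f S := by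
  have hcont := hf.continuousOn_fderiv_of_isOpen hs
  have hstrict : HasStrictFDerivAt f (e : E →L[ℂ] F) a := by
    rw [← he]
    refine hasStrictFDerivAt_of_hasFDerivAt_of_continuousAt ?_
      (hcont.continuousAt (hs.mem_nhds ha))
    filter_upwards [hs.mem_nhds ha] with x hx
    exact (hf.differentiableAt (hs.mem_nhds hx)).hasFDerivAt
  set Ψ := hstrict.toOpenPartialHomeomorph f
  -- Near `a` the derivative stays invertible, so the local inverse is differentiable there.
  set S := (s ∩ fderiv ℂ f ⁻¹' range ((↑) : (E ≃L[ℂ] F) → E →L[ℂ] F)) ∩ Ψ.source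
  have hSs : S ⊆ s := fun x hx => hx.1.1
  have hSΨ : S ⊆ Ψ.source := fun x hx => hx.2
  have hS : IsOpen S :=
    (hcont.isOpen_inter_preimage hs ContinuousLinearEquiv.isOpen).inter Ψ.open_source
  refine ⟨S, hSs, hS, ⟨⟨ha, e, he.symm⟩, hstrict.mem_toOpenPartialHomeomorph_source⟩,
    hf.mono hSs, Ψ.injOn.mono hSΨ, Ψ.isOpen_image_of_subset_source hS hSΨ, Ψ.symm, ?_,
    fun z hz => Ψ.left_inv (hSΨ hz)⟩
  rintro _ ⟨x, hx, rfl⟩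
  obtain ⟨e', he'⟩ := hx.1.2
  have hderiv : HasFDerivAt f (e' : E →L[ℂ] F) (Ψ.symm (f x)) := by
    rw [show Ψ.symm (f x) = x from Ψ.left_inv (hSΨ hx), he']
    exact (hf.differentiableAt (hs.mem_nhds (hSs hx))).hasFDerivAt
  exact (Ψ.hasFDerivAt_symm (Ψ.map_source (hSΨ hx)) hderiv).differentiableAt
    |>.differentiableWithinAt

end Biholomorphic

theorem exists_isOpen_mapsTo_nhds_subset {G X : Type*} [Monoid G] [TopologicalSpace G]
    [CompactSpace G] [TopologicalSpace X] {ρ : G → X → X} {D S : Set X} {p : X}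
    (hD : IsOpen D) (hcont : ContinuousOn (fun z : G × X => ρ z.1 z.2) (univ ×ˢ D))
    (hone : ∀ z ∈ D, ρ 1 z = z) (hmul : ∀ g h : G, ∀ z ∈ D, ρ (g * h) z = ρ g (ρ h z))
    (hS : IsOpen S) (hSD : S ⊆ D) (hpS : p ∈ S) (hfix : ∀ g, ρ g p = p) :
    ∃ U ⊆ S, IsOpen U ∧ p ∈ U ∧ ∀ g, MapsTo (ρ g) U U := by
  refine ⟨{q ∈ D | ∀ g, ρ g q ∈ S}, fun q hq => hone q hq.1 ▸ hq.2 1, ?_,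
    ⟨hSD hpS, fun g => (hfix g).symm ▸ hpS⟩, fun g q hq => ⟨hSD (hq.2 g), fun h => ?_⟩⟩
  · refine isOpen_iff_mem_nhds.mpr fun q₀ hq₀ => ?_
    -- Compactness of `G` turns the pointwise conditions `ρ g q ∈ S` into a uniform one.
    have hall : ∀ᶠ q in 𝓝 q₀, ∀ g ∈ (univ : Set G), ρ g q ∈ S := by
      refine isCompact_univ.eventually_forall_of_forall_eventually fun g _ => ?_
      have hat : ContinuousAt (fun z : G × X => ρ z.1 z.2) (g, q₀) :=
        hcont.continuousAt (prod_mem_nhds univ_mem (hD.mem_nhds hq₀.1))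
      have hat' : ContinuousAt (fun z : X × G => ρ z.2 z.1) (q₀, g) :=
        hat.comp_of_eq continuous_swap.continuousAt rfl
      exact hat'.preimage_mem_nhds (hS.mem_nhds (hq₀.2 g))
    filter_upwards [hD.mem_nhds hq₀.1, hall] with q hqD hqS using ⟨hqD, fun g => hqS g trivial⟩
  · rw [← hmul h g q hq.1]
    exact hq.2 (h * g)

section Averaging

open MeasureTheory

variable {G E : Type*} [Group G] [NormedAddCommGroup E] [NormedSpace ℂ E]

noncomputable def averagedChart [MeasurableSpace G] (ρ : G → E → E) (μ : Measure G) (p q : E) : E :=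
  ∫ g, fderiv ℂ (ρ g) p (ρ g⁻¹ q - p) ∂μ

theorem averagedChart_self [MeasurableSpace G] {ρ : G → E → E} {μ : Measure G} {p : E}
    (hfix : ∀ g, ρ g p = p) : averagedChart ρ μ p p = 0 := by
  simp [averagedChart, hfix]

variable [TopologicalSpace G]

structure IsHolomorphicAction (ρ : G → E → E) (D : Set E) : Prop where
  isOpen : IsOpen D
  continuousOn : ContinuousOn (fun z : G × E => ρ z.1 z.2) (univ ×ˢ D)
  map_one : ∀ z ∈ D, ρ 1 z = z
  map_mul : ∀ g h : G, ∀ z ∈ D, ρ (g * h) z = ρ g (ρ h z)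
  differentiableOn : ∀ g, DifferentiableOn ℂ (ρ g) D

namespace IsHolomorphicAction

variable {ρ : G → E → E} {D : Set E} {p : E}

theorem fderiv_mul (hρ : IsHolomorphicAction ρ D) (hp : p ∈ D) (hfix : ∀ g, ρ g p = p)
    (g h : G) : fderiv ℂ (ρ (g * h)) p = (fderiv ℂ (ρ g) p).comp (fderiv ℂ (ρ h) p) := by
  have hDp := hρ.isOpen.mem_nhds hp
  have heq : ρ (g * h) =ᶠ[𝓝 p] ρ g ∘ ρ h := by
    filter_upwards [hDp] with z hz using hρ.map_mul g h z hz
  have hg : DifferentiableAt ℂ (ρ g) (ρ h p) := by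
    rw [hfix h]
    exact (hρ.differentiableOn g).differentiableAt hDp
  rw [heq.fderiv_eq, fderiv_comp p hg ((hρ.differentiableOn h).differentiableAt hDp), hfix h]

theorem fderiv_one (hρ : IsHolomorphicAction ρ D) (hp : p ∈ D) :
    fderiv ℂ (ρ 1) p = ContinuousLinearMap.id ℂ E := by
  have heq : ρ 1 =ᶠ[𝓝 p] id := by
    filter_upwards [hρ.isOpen.mem_nhds hp] with z hz using hρ.map_one z hz
  rw [heq.fderiv_eq, fderiv_id]

theorem fderiv_comp_fderiv_inv (hρ : IsHolomorphicAction ρ D) (hp : p ∈ D)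
    (hfix : ∀ g, ρ g p = p) (g : G) :
    (fderiv ℂ (ρ g) p).comp (fderiv ℂ (ρ g⁻¹) p) = ContinuousLinearMap.id ℂ E := by
  rw [← hρ.fderiv_mul hp hfix, mul_inv_cancel, hρ.fderiv_one hp]

variable [ProperSpace E]

theorem continuousOn_fderiv (hρ : IsHolomorphicAction ρ D) :
    ContinuousOn (fun z : G × E => fderiv ℂ (ρ z.1) z.2) (univ ×ˢ D) :=
  continuousOn_fderiv_of_continuousOn_uncurry isOpen_univ hρ.isOpen hρ.continuousOn
    fun g _ => hρ.differentiableOn g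

theorem continuous_fderiv (hρ : IsHolomorphicAction ρ D) (hp : p ∈ D) :
    Continuous fun g => fderiv ℂ (ρ g) p :=
  hρ.continuousOn_fderiv.comp_continuous (Continuous.prodMk_left p) fun _ => ⟨trivial, hp⟩

variable [IsTopologicalGroup G]

theorem continuousOn_averagedChart_integrand (hρ : IsHolomorphicAction ρ D) (hp : p ∈ D) :
    ContinuousOn (fun z : G × E => fderiv ℂ (ρ z.1) p (ρ z.1⁻¹ z.2 - p)) (univ ×ˢ D) := by
  have hL := ((hρ.continuous_fderiv hp).comp continuous_fst).continuousOn (s := univ ×ˢ D)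
  have hinv : ContinuousOn (fun z : G × E => ρ z.1⁻¹ z.2) (univ ×ˢ D) :=
    hρ.continuousOn.comp (continuous_fst.inv.prodMk continuous_snd).continuousOn
      fun z hz => ⟨trivial, hz.2⟩
  exact isBoundedBilinearMap_apply.continuous.comp_continuousOn
    (hL.prodMk (hinv.sub continuousOn_const))

theorem continuousOn_fderiv_averagedChart_integrand (hρ : IsHolomorphicAction ρ D)
    (hp : p ∈ D) : ContinuousOn
      (fun z : G × E => (fderiv ℂ (ρ z.1) p).comp (fderiv ℂ (ρ z.1⁻¹) z.2)) (univ ×ˢ D) := by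
  have hL := ((hρ.continuous_fderiv hp).comp continuous_fst).continuousOn (s := univ ×ˢ D)
  have hinv : ContinuousOn (fun z : G × E => fderiv ℂ (ρ z.1⁻¹) z.2) (univ ×ˢ D) :=
    hρ.continuousOn_fderiv.comp (continuous_fst.inv.prodMk continuous_snd).continuousOn
      fun z hz => ⟨trivial, hz.2⟩
  exact isBoundedBilinearMap_comp.continuous.comp_continuousOn (hL.prodMk hinv)

variable [CompactSpace G] [MeasurableSpace G] [BorelSpace G] {μ : Measure G}
  [IsFiniteMeasure μ]

theorem integrable_averagedChart_integrand (hρ : IsHolomorphicAction ρ D) (hp : p ∈ D)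
    {q : E} (hq : q ∈ D) : Integrable (fun g => fderiv ℂ (ρ g) p (ρ g⁻¹ q - p)) μ :=
  ((hρ.continuousOn_averagedChart_integrand hp).comp_continuous (Continuous.prodMk_left q)
    fun _ => ⟨trivial, hq⟩).integrable_of_hasCompactSupport (HasCompactSupport.of_compactSpace _)

theorem hasFDerivAt_averagedChart (hρ : IsHolomorphicAction ρ D) (hp : p ∈ D) {x : E}
    (hx : x ∈ D) : HasFDerivAt (averagedChart ρ μ p)
      (∫ g, (fderiv ℂ (ρ g) p).comp (fderiv ℂ (ρ g⁻¹) x) ∂μ) x := by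
  obtain ⟨ε, hε, hεD⟩ := nhds_basis_closedBall.mem_iff.mp (hρ.isOpen.mem_nhds hx)
  have hF' := hρ.continuousOn_fderiv_averagedChart_integrand hp
  obtain ⟨C, hC⟩ := (isCompact_univ.prod (isCompact_closedBall x ε)).exists_bound_of_continuousOn
    (hF'.mono (prod_mono subset_rfl hεD))
  refine hasFDerivAt_integral_of_dominated_of_fderiv_le (closedBall_mem_nhds x hε)
    (bound := fun _ => C) ?_ (hρ.integrable_averagedChart_integrand hp hx)
    (hF'.comp_continuous (Continuous.prodMk_left x)
      fun _ => ⟨trivial, hx⟩).aestronglyMeasurable_of_compactSpace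
    (ae_of_all _ fun g y hy => hC (g, y) ⟨trivial, hy⟩) (integrable_const C)
    (ae_of_all _ fun g y hy => ?_)
  · filter_upwards [hρ.isOpen.mem_nhds hx] with y hy
    exact (hρ.integrable_averagedChart_integrand hp hy).aestronglyMeasurable
  · have hdiff := (hρ.differentiableOn g⁻¹).differentiableAt (hρ.isOpen.mem_nhds (hεD hy))
    exact (fderiv ℂ (ρ g) p).hasFDerivAt.comp y (hdiff.hasFDerivAt.sub_const p)

theorem differentiableOn_averagedChart (hρ : IsHolomorphicAction ρ D) (hp : p ∈ D) :
    DifferentiableOn ℂ (averagedChart ρ μ p) D := fun _ hx =>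
  (hρ.hasFDerivAt_averagedChart hp hx).differentiableAt.differentiableWithinAt

theorem fderiv_averagedChart_self [IsProbabilityMeasure μ] (hρ : IsHolomorphicAction ρ D)
    (hp : p ∈ D) (hfix : ∀ g, ρ g p = p) :
    fderiv ℂ (averagedChart ρ μ p) p = ContinuousLinearMap.id ℂ E := by
  simp [(hρ.hasFDerivAt_averagedChart (μ := μ) hp hp).fderiv, hρ.fderiv_comp_fderiv_inv hp hfix]

theorem averagedChart_equivariant [μ.IsMulLeftInvariant] (hρ : IsHolomorphicAction ρ D)
    (hp : p ∈ D) (hfix : ∀ g, ρ g p = p) (h : G) {q : E} (hq : q ∈ D) :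
    averagedChart ρ μ p (ρ h q) = fderiv ℂ (ρ h) p (averagedChart ρ μ p q) := by
  have hshift : ∀ g, fderiv ℂ (ρ g) p (ρ g⁻¹ (ρ h q) - p) =
      fderiv ℂ (ρ h) p (fderiv ℂ (ρ (h⁻¹ * g)) p (ρ (h⁻¹ * g)⁻¹ q - p)) := fun g => by
    rw [← ContinuousLinearMap.comp_apply, ← hρ.fderiv_mul hp hfix, mul_inv_cancel_left,
      ← hρ.map_mul _ _ _ hq, mul_inv_rev, inv_inv]
  simp_rw [averagedChart, hshift]
  rw [ContinuousLinearMap.integral_comp_comm _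
      ((hρ.integrable_averagedChart_integrand hp hq).comp_mul_left h⁻¹),
    integral_mul_left_eq_self (fun g => fderiv ℂ (ρ g) p (ρ g⁻¹ q - p)) h⁻¹]

end IsHolomorphicAction

end Averaging

theorem bochner_linearization_general {n : ℕ} (D : Set (Fin n → ℂ))
    (hD_open : IsOpen D)
    (p : Fin n → ℂ) (hp : p ∈ D)
    (G : Type*) [Group G] [TopologicalSpace G] [IsTopologicalGroup G] [CompactSpace G]
    (ρ : G → (Fin n → ℂ) → (Fin n → ℂ))
    (hρ_cont : ContinuousOn (fun q : G × (Fin n → ℂ) => ρ q.1 q.2) (univ ×ˢ D))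
    (hρ_one : ∀ z ∈ D, ρ 1 z = z)
    (hρ_mul : ∀ g h : G, ∀ z ∈ D, ρ (g * h) z = ρ g (ρ h z))
    (hρ_holo : ∀ g : G, DifferentiableOn ℂ (ρ g) D)
    (hρ_fix : ∀ g : G, ρ g p = p) :
    ∃ (U : Set (Fin n → ℂ)) (ψ : (Fin n → ℂ) → (Fin n → ℂ)),
      IsOpen U ∧ p ∈ U ∧ U ⊆ D ∧
      (∀ g : G, Set.MapsTo (ρ g) U U) ∧
      DifferentiableOn ℂ ψ U ∧ ψ p = 0 ∧ Set.InjOn ψ U ∧ IsOpen (ψ '' U) ∧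
      (∃ φ : (Fin n → ℂ) → (Fin n → ℂ),
        DifferentiableOn ℂ φ (ψ '' U) ∧ ∀ z ∈ U, φ (ψ z) = z) ∧
      ∀ g : G, ∀ q ∈ U, ψ (ρ g q) = fderiv ℂ (ρ g) p (ψ q) := by
  have hρ : IsHolomorphicAction ρ D := ⟨hD_open, hρ_cont, hρ_one, hρ_mul, hρ_holo⟩
  borelize G
  let μ := MeasureTheory.Measure.haarMeasure (⊤ : TopologicalSpace.PositiveCompacts G)
  have : MeasureTheory.IsProbabilityMeasure μ := ⟨MeasureTheory.Measure.haarMeasure_self⟩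
  set ψ := averagedChart ρ μ p
  obtain ⟨S, hSD, hS, hpS, hψS⟩ :=
    (hρ.differentiableOn_averagedChart (μ := μ) hp).exists_isBiholomorphicOn hD_open hp
      (e := ContinuousLinearEquiv.refl ℂ _) (hρ.fderiv_averagedChart_self hp hρ_fix)
  obtain ⟨U, hUS, hU, hpU, hUρ⟩ :=
    exists_isOpen_mapsTo_nhds_subset hD_open hρ_cont hρ_one hρ_mul hS hSD hpS hρ_fix
  obtain ⟨hψd, hψinj, hψopen, hφ⟩ := hψS.mono hU hUS
  exact ⟨U, ψ, hU, hpU, hUS.trans hSD, hUρ, hψd, averagedChart_self hρ_fix, hψinj, hψopen, hφ,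
    fun g q hq => hρ.averagedChart_equivariant hp hρ_fix g (hSD (hUS hq))⟩

/-- **Bochner linearization (Lemma 2.1, non-foliated content).**
Let `D ⊆ ℂⁿ` be a bounded domain, `p ∈ D`, and `G` a compact topological group acting
continuously on `D` by biholomorphic automorphisms fixing `p`. Then there is a `G`-invariant
open neighbourhood `U ⊆ D` of `p` and a biholomorphism `ψ` from `U` onto an open subset of
`ℂⁿ` with `ψ p = 0` such that `ψ (g • q) = (dg_p) (ψ q)` for all `g ∈ G`, `q ∈ U`, where
`dg_p = fderiv ℂ (ρ g) p` is the complex derivative of the action of `g` at `p`. -/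
theorem bochner_linearization {n : ℕ} (D : Set (Fin n → ℂ))
    (hD_open : IsOpen D) (hD_conn : IsConnected D) (hD_bdd : Bornology.IsBounded D)
    (p : Fin n → ℂ) (hp : p ∈ D)
    (G : Type*) [Group G] [TopologicalSpace G] [IsTopologicalGroup G] [CompactSpace G]
    (ρ : G → (Fin n → ℂ) → (Fin n → ℂ))
    (hρ_cont : ContinuousOn (fun q : G × (Fin n → ℂ) => ρ q.1 q.2) (univ ×ˢ D))
    (hρ_one : ∀ z ∈ D, ρ 1 z = z)
    (hρ_mul : ∀ g h : G, ∀ z ∈ D, ρ (g * h) z = ρ g (ρ h z))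
    (hρ_holo : ∀ g : G, DifferentiableOn ℂ (ρ g) D)
    (hρ_maps : ∀ g : G, Set.MapsTo (ρ g) D D)
    (hρ_fix : ∀ g : G, ρ g p = p) :
    ∃ (U : Set (Fin n → ℂ)) (ψ : (Fin n → ℂ) → (Fin n → ℂ)),
      IsOpen U ∧ p ∈ U ∧ U ⊆ D ∧
      (∀ g : G, Set.MapsTo (ρ g) U U) ∧
      DifferentiableOn ℂ ψ U ∧ ψ p = 0 ∧ Set.InjOn ψ U ∧ IsOpen (ψ '' U) ∧
      (∃ φ : (Fin n → ℂ) → (Fin n → ℂ),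
        DifferentiableOn ℂ φ (ψ '' U) ∧ ∀ z ∈ U, φ (ψ z) = z) ∧
      ∀ g : G, ∀ q ∈ U, ψ (ρ g q) = fderiv ℂ (ρ g) p (ψ q) :=
  bochner_linearization_general D hD_open p hp G ρ hρ_cont hρ_one hρ_mul hρ_holo hρ_fix
end

section
/- Let D ⊆ ℂⁿ be a bounded domain with 0 ∈ D, and let G be a compact topological group with Haar probability measure μ, acting continuously on D so that each g ∈ G acts as a biholomorphic automorphism of D fixing 0. For g ∈ G let L(g) ∈ GL(n,ℂ) be the complex derivative at 0 of the action of g, and define ψ : D → ℂⁿ by ψ(x) = ∫_G L(h)^{-1}(h·x) dμ(h) (a Bochner integral). Then: (i) g ↦ L(g) is a continuous group homomorphism from G to GL(n,ℂ); (ii) ψ is holomorphic on D, ψ(0) = 0, and the derivative of ψ at 0 is the identity; (iii) ψ(g·x) = L(g)(ψ(x)) for every g ∈ G and x ∈ D. -/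
/-!
Bochner's averaging trick. Since every `ρ g` fixes `0`, the chain rule makes `g ↦ L g = dρ_g(0)`
a homomorphism. The Cauchy estimate bounds the derivative of a holomorphic map on a ball by its
sup norm; as `ρ g` depends uniformly on `g` over compact balls, this makes `L` continuous, and
since `D` is bounded and `G` compact it dominates the derivatives of `(L h)⁻¹ ∘ ρ h`, so `ψ` may be
differentiated under the integral sign. Each `(L h)⁻¹ ∘ ρ h` has derivative `id` at `0`, and
equivariance follows from the substitution `h ↦ h g⁻¹`, valid because Haar measure on a compact
group is also right invariant.
-/

open Set Function Metric MeasureTheory Filter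

section Holomorphic

variable {E F : Type*} [NormedAddCommGroup E] [NormedSpace ℂ E]
  [NormedAddCommGroup F] [NormedSpace ℂ F]

theorem norm_fderiv_le_of_forall_norm_le {f : E → F} {c : E} {r C : ℝ}
    (hd : DifferentiableOn ℂ f (ball c r)) (hC : ∀ z ∈ ball c r, ‖f z‖ ≤ C) (hr : 0 < r) :
    ‖fderiv ℂ f c‖ ≤ 2 * C / r := by
  refine Complex.norm_fderiv_le_div_of_mapsTo_ball hd (fun z hz => ?_) hr
  rw [mem_closedBall, dist_eq_norm]
  linarith [norm_sub_le (f z) (f c), hC z hz, hC c (mem_ball_self hr)]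

variable [ProperSpace E] {G : Type*} [TopologicalSpace G]

theorem continuous_fderiv_of_continuousOn_uncurry {f : G → E → F} {U : Set E} (hU : IsOpen U)
    (hf : ContinuousOn (uncurry f) (univ ×ˢ U)) (hd : ∀ g, DifferentiableOn ℂ (f g) U)
    {x : E} (hx : x ∈ U) : Continuous fun g => fderiv ℂ (f g) x := by
  obtain ⟨r, hr, hrU⟩ := nhds_basis_closedBall.mem_iff.mp (hU.mem_nhds hx)
  have hdx : ∀ g, DifferentiableAt ℂ (f g) x := fun g => (hd g).differentiableAt (hU.mem_nhds hx)
  refine continuous_iff_continuousAt.mpr fun g₀ => Metric.tendsto_nhds.mpr fun ε hε => ?_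
  obtain ⟨v, hv, hvδ⟩ := (isCompact_closedBall x r).mem_uniformity_of_prod
    (hf.mono (prod_mono subset_rfl hrU)) (mem_univ g₀) (dist_mem_uniformity (by positivity :
      0 < ε * r / 4))
  rw [nhdsWithin_univ] at hv
  filter_upwards [hv] with g hg
  have hsub : ∀ z ∈ ball x r, ‖(f g - f g₀) z‖ ≤ ε * r / 4 := fun z hz => by
    simpa only [Pi.sub_apply, ← dist_eq_norm] using (hvδ g hg z (ball_subset_closedBall hz)).le
  have hest := norm_fderiv_le_of_forall_norm_le
    (((hd g).sub (hd g₀)).mono (ball_subset_closedBall.trans hrU)) hsub hr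
  rw [fderiv_sub (hdx g) (hdx g₀)] at hest
  rw [dist_eq_norm]
  calc _ ≤ 2 * (ε * r / 4) / r := hest
    _ < ε := by field_simp; linarith

variable [CompactSpace G] [MeasurableSpace G] [OpensMeasurableSpace G]

theorem hasFDerivAt_integral_of_continuousOn_uncurry {μ : Measure G} [IsFiniteMeasure μ]
    {f : G → E → F} {U : Set E} (hU : IsOpen U)
    (hf : ContinuousOn (uncurry f) (univ ×ˢ U)) (hd : ∀ g, DifferentiableOn ℂ (f g) U)
    {C : ℝ} (hC : ∀ g, ∀ y ∈ U, ‖f g y‖ ≤ C) {x : E} (hx : x ∈ U) :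
    HasFDerivAt (fun y => ∫ g, f g y ∂μ) (∫ g, fderiv ℂ (f g) x ∂μ) x := by
  obtain ⟨ε, hε, hεU⟩ := isOpen_iff.mp hU x hx
  have hball : ∀ y ∈ ball x (ε / 2), ball y (ε / 2) ⊆ U := fun y hy =>
    (ball_subset_ball' (by linarith [mem_ball.mp hy])).trans hεU
  have hcont : ∀ y ∈ U, Continuous fun g => f g y := fun y hy =>
    continuous_iff_continuousAt.mpr fun g =>
      (hf.continuousAt ((isOpen_univ.prod hU).mem_nhds ⟨mem_univ g, hy⟩)).comp
        (Continuous.prodMk_left y).continuousAt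
  refine hasFDerivAt_integral_of_dominated_of_fderiv_le (F := fun y g => f g y)
    (F' := fun y g => fderiv ℂ (f g) y) (ball_mem_nhds x (half_pos hε))
    (bound := fun _ => 2 * C / (ε / 2)) ?_ ?_ ?_ ?_ (integrable_const _) ?_
  · filter_upwards [hU.mem_nhds hx] with y hy
    exact (hcont y hy).aestronglyMeasurable_of_compactSpace
  · exact .of_bound (hcont x hx).aestronglyMeasurable_of_compactSpace C
      (.of_forall fun g => hC g x hx)
  · exact (continuous_fderiv_of_continuousOn_uncurry hU hf hd
      hx).aestronglyMeasurable_of_compactSpace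
  · exact .of_forall fun g y hy => norm_fderiv_le_of_forall_norm_le ((hd g).mono (hball y hy))
      (fun z hz => hC g z (hball y hy hz)) (half_pos hε)
  · exact .of_forall fun g y hy =>
      ((hd g).differentiableAt (hU.mem_nhds (hball y hy (mem_ball_self (half_pos hε))))).hasFDerivAt

end Holomorphic

section FixedPoint

variable {𝕜 E : Type*} [NontriviallyNormedField 𝕜] [NormedAddCommGroup E] [NormedSpace 𝕜 E]

theorem fderiv_mul_eq_comp_of_forall_fixed {M : Type*} [Mul M] {ρ : M → E → E} {U : Set E}
    (hU : IsOpen U) {p : E} (hp : p ∈ U) (hmul : ∀ g h : M, ∀ z ∈ U, ρ (g * h) z = ρ g (ρ h z))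
    (hd : ∀ g, DifferentiableOn 𝕜 (ρ g) U) (hfix : ∀ g, ρ g p = p) (g h : M) :
    fderiv 𝕜 (ρ (g * h)) p = (fderiv 𝕜 (ρ g) p).comp (fderiv 𝕜 (ρ h) p) := by
  have hdp : ∀ g, DifferentiableAt 𝕜 (ρ g) p := fun g => (hd g).differentiableAt (hU.mem_nhds hp)
  rw [(eventuallyEq_of_mem (hU.mem_nhds hp) (hmul g h)).fderiv_eq,
    fderiv_fun_comp p (by rw [hfix h]; exact hdp g) (hdp h), hfix h]

theorem fderiv_symm_apply_eq_id {F : Type*} [NormedAddCommGroup F] [NormedSpace 𝕜 F]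
    {e : E ≃L[𝕜] F} {f : E → F} {p : E} (h : fderiv 𝕜 f p = e) :
    fderiv 𝕜 (fun y => e.symm (f y)) p = ContinuousLinearMap.id 𝕜 E := by
  rw [show (fun y => e.symm (f y)) = e.symm ∘ f from rfl, e.symm.comp_fderiv, h]
  ext1 v
  simp

end FixedPoint

section Representation

variable {G 𝕜 F : Type*} [Group G] [RCLike 𝕜] [NormedAddCommGroup F] [NormedSpace 𝕜 F]
  {L : G → F ≃L[𝕜] F}

theorem symm_apply_eq_apply_inv (h1 : ∀ x, L 1 x = x)
    (hmul : ∀ g h x, L (g * h) x = L g (L h x)) (g : G) (x : F) : (L g).symm x = L g⁻¹ x := by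
  rw [ContinuousLinearEquiv.symm_apply_eq, ← hmul, mul_inv_cancel, h1]

theorem continuous_symm_of_map_mul [TopologicalSpace G] [ContinuousInv G] (h1 : ∀ x, L 1 x = x)
    (hmul : ∀ g h x, L (g * h) x = L g (L h x)) (hL : Continuous fun g => (L g : F →L[𝕜] F)) :
    Continuous fun g => ((L g).symm : F →L[𝕜] F) := by
  simp only [fun g => (ContinuousLinearMap.ext (symm_apply_eq_apply_inv h1 hmul g) :
    ((L g).symm : F →L[𝕜] F) = L g⁻¹)]
  exact hL.comp continuous_inv

theorem integral_symm_apply_mul_right [NormedSpace ℝ F] [MeasurableSpace G] [MeasurableMul G]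
    (μ : Measure G) [μ.IsMulRightInvariant] (h1 : ∀ x, L 1 x = x)
    (hmul : ∀ g h x, L (g * h) x = L g (L h x)) (φ : G → F) (g : G) :
    ∫ h, (L h).symm (φ (h * g)) ∂μ = L g (∫ h, (L h).symm (φ h) ∂μ) := by
  calc ∫ h, (L h).symm (φ (h * g)) ∂μ = ∫ h, (L (h * g⁻¹)).symm (φ h) ∂μ := by
        rw [← integral_mul_right_eq_self (fun h => (L (h * g⁻¹)).symm (φ h)) g]
        simp only [mul_inv_cancel_right]
    _ = ∫ h, L g ((L h).symm (φ h)) ∂μ := by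
        congr 1 with h
        rw [symm_apply_eq_apply_inv h1 hmul, symm_apply_eq_apply_inv h1 hmul, mul_inv_rev, inv_inv,
          hmul]
    _ = L g (∫ h, (L h).symm (φ h) ∂μ) := (L g).integral_comp_comm _

end Representation

theorem isMulRightInvariant_of_isProbabilityMeasure {G : Type*} [Group G] [TopologicalSpace G]
    [IsTopologicalGroup G] [CompactSpace G] [MeasurableSpace G] [BorelSpace G] (μ : Measure G)
    [μ.IsHaarMeasure] [IsProbabilityMeasure μ] : μ.IsMulRightInvariant where
  map_mul_right_eq_self g :=
    have := Measure.isProbabilityMeasure_map (μ := μ) (measurable_mul_const g).aemeasurable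
    Measure.isHaarMeasure_eq_of_isProbabilityMeasure _ _

theorem bochner_averaging_general {n : ℕ} (D : Set (Fin n → ℂ))
    (hD_open : IsOpen D) (hD_bdd : Bornology.IsBounded D)
    (h0 : (0 : Fin n → ℂ) ∈ D)
    (G : Type*) [Group G] [TopologicalSpace G] [IsTopologicalGroup G] [CompactSpace G]
    [MeasurableSpace G] [BorelSpace G]
    (μ : Measure G) [μ.IsHaarMeasure] [IsProbabilityMeasure μ]
    (ρ : G → (Fin n → ℂ) → (Fin n → ℂ))
    (hρ_cont : ContinuousOn (fun q : G × (Fin n → ℂ) => ρ q.1 q.2) (univ ×ˢ D))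
    (hρ_one : ∀ z ∈ D, ρ 1 z = z)
    (hρ_mul : ∀ g h : G, ∀ z ∈ D, ρ (g * h) z = ρ g (ρ h z))
    (hρ_holo : ∀ g : G, DifferentiableOn ℂ (ρ g) D)
    (hρ_maps : ∀ g : G, Set.MapsTo (ρ g) D D)
    (hρ_fix : ∀ g : G, ρ g 0 = 0)
    (L : G → (Fin n → ℂ) ≃L[ℂ] (Fin n → ℂ))
    (hL : ∀ g : G, ((L g : (Fin n → ℂ) →L[ℂ] (Fin n → ℂ)) : (Fin n → ℂ) → (Fin n → ℂ))
      = fderiv ℂ (ρ g) 0)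
    (ψ : (Fin n → ℂ) → (Fin n → ℂ))
    (hψ : ∀ x : Fin n → ℂ, ψ x = ∫ h : G, (L h).symm (ρ h x) ∂μ) :
    -- (i) `L` is a continuous group homomorphism into `GL(n,ℂ)`
    ((∀ x : Fin n → ℂ, L 1 x = x) ∧
     (∀ g h : G, ∀ x : Fin n → ℂ, L (g * h) x = L g (L h x)) ∧
     Continuous fun g : G => (L g : (Fin n → ℂ) →L[ℂ] (Fin n → ℂ))) ∧
    -- (ii) `ψ` is holomorphic on `D`, `ψ 0 = 0` and its derivative at `0` is the identity
    (DifferentiableOn ℂ ψ D ∧ ψ 0 = 0 ∧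
      fderiv ℂ ψ 0 = ContinuousLinearMap.id ℂ (Fin n → ℂ)) ∧
    -- (iii) `ψ` intertwines the action `ρ` with the linear action `L`
    (∀ g : G, ∀ x ∈ D, ψ (ρ g x) = L g (ψ x)) := by
  have hLclm : ∀ g, (L g : (Fin n → ℂ) →L[ℂ] (Fin n → ℂ)) = fderiv ℂ (ρ g) 0 := fun g =>
    DFunLike.coe_injective (hL g)
  have hL1 : ∀ x, L 1 x = x := fun x => by
    rw [← ContinuousLinearEquiv.coe_coe, hLclm,
      (eventuallyEq_of_mem (hD_open.mem_nhds h0) hρ_one).fderiv_eq, fderiv_fun_id]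
    rfl
  have hLmul : ∀ g h x, L (g * h) x = L g (L h x) := fun g h x => by
    simp only [← ContinuousLinearEquiv.coe_coe, hLclm,
      fderiv_mul_eq_comp_of_forall_fixed hD_open h0 hρ_mul hρ_holo hρ_fix,
      ContinuousLinearMap.comp_apply]
  have hLcont : Continuous fun g => (L g : (Fin n → ℂ) →L[ℂ] (Fin n → ℂ)) := by
    simpa only [hLclm] using continuous_fderiv_of_continuousOn_uncurry hD_open hρ_cont hρ_holo h0
  have hLsymm_cont := continuous_symm_of_map_mul hL1 hLmul hLcont
  obtain ⟨C, hC⟩ := isCompact_univ.exists_bound_of_continuousOn hLsymm_cont.continuousOn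
  obtain ⟨M, hM⟩ := hD_bdd.exists_norm_le
  have hψ_deriv : ∀ x ∈ D,
      HasFDerivAt ψ (∫ h, fderiv ℂ (fun y => (L h).symm (ρ h y)) x ∂μ) x := fun x hx => by
    rw [funext hψ]
    exact hasFDerivAt_integral_of_continuousOn_uncurry hD_open
      ((hLsymm_cont.comp continuous_fst).continuousOn.clm_apply hρ_cont)
      (fun h => ((L h).symm : (Fin n → ℂ) →L[ℂ] (Fin n → ℂ)).differentiable.comp_differentiableOn
        (hρ_holo h))
      (fun h y hy => ContinuousLinearMap.le_of_opNorm_le_of_le _ (hC h (mem_univ h))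
        (hM _ (hρ_maps h hy))) hx
  have := isMulRightInvariant_of_isProbabilityMeasure μ
  refine ⟨⟨hL1, hLmul, hLcont⟩,
    ⟨fun x hx => (hψ_deriv x hx).differentiableAt.differentiableWithinAt, by simp [hψ, hρ_fix], ?_⟩,
    fun g x hx => ?_⟩
  · simp [(hψ_deriv 0 h0).fderiv, fun h => fderiv_symm_apply_eq_id (hLclm h).symm]
  · rw [hψ, hψ, ← integral_symm_apply_mul_right μ hL1 hLmul]
    simp only [hρ_mul _ g x hx]

/-- **Bochner averaging (proof of Lemma 2.1).**
Let `D ⊆ ℂⁿ` be a bounded domain with `0 ∈ D`, and `G` a compact topological group with Haar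
probability measure `μ`, acting continuously on `D` by biholomorphic automorphisms fixing `0`.
For `g ∈ G` let `L g ∈ GL(n,ℂ)` be the complex derivative of the action of `g` at `0`, and set
`ψ x = ∫ h, (L h)⁻¹ (ρ h x) dμ(h)`. Then:
(i) `g ↦ L g` is a continuous group homomorphism into `GL(n,ℂ)`;
(ii) `ψ` is holomorphic on `D`, `ψ 0 = 0` and `dψ_0 = Id`;
(iii) `ψ (g • x) = L g (ψ x)` for all `g ∈ G`, `x ∈ D`. -/
theorem bochner_averaging {n : ℕ} (D : Set (Fin n → ℂ))
    (hD_open : IsOpen D) (hD_conn : IsConnected D) (hD_bdd : Bornology.IsBounded D)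
    (h0 : (0 : Fin n → ℂ) ∈ D)
    (G : Type*) [Group G] [TopologicalSpace G] [IsTopologicalGroup G] [CompactSpace G]
    [MeasurableSpace G] [BorelSpace G]
    (μ : Measure G) [μ.IsHaarMeasure] [IsProbabilityMeasure μ]
    (ρ : G → (Fin n → ℂ) → (Fin n → ℂ))
    (hρ_cont : ContinuousOn (fun q : G × (Fin n → ℂ) => ρ q.1 q.2) (univ ×ˢ D))
    (hρ_one : ∀ z ∈ D, ρ 1 z = z)
    (hρ_mul : ∀ g h : G, ∀ z ∈ D, ρ (g * h) z = ρ g (ρ h z))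
    (hρ_holo : ∀ g : G, DifferentiableOn ℂ (ρ g) D)
    (hρ_maps : ∀ g : G, Set.MapsTo (ρ g) D D)
    (hρ_fix : ∀ g : G, ρ g 0 = 0)
    (L : G → (Fin n → ℂ) ≃L[ℂ] (Fin n → ℂ))
    (hL : ∀ g : G, ((L g : (Fin n → ℂ) →L[ℂ] (Fin n → ℂ)) : (Fin n → ℂ) → (Fin n → ℂ))
      = fderiv ℂ (ρ g) 0)
    (ψ : (Fin n → ℂ) → (Fin n → ℂ))
    (hψ : ∀ x : Fin n → ℂ, ψ x = ∫ h : G, (L h).symm (ρ h x) ∂μ) :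
    -- (i) `L` is a continuous group homomorphism into `GL(n,ℂ)`
    ((∀ x : Fin n → ℂ, L 1 x = x) ∧
     (∀ g h : G, ∀ x : Fin n → ℂ, L (g * h) x = L g (L h x)) ∧
     Continuous fun g : G => (L g : (Fin n → ℂ) →L[ℂ] (Fin n → ℂ))) ∧
    -- (ii) `ψ` is holomorphic on `D`, `ψ 0 = 0` and its derivative at `0` is the identity
    (DifferentiableOn ℂ ψ D ∧ ψ 0 = 0 ∧
      fderiv ℂ ψ 0 = ContinuousLinearMap.id ℂ (Fin n → ℂ)) ∧
    -- (iii) `ψ` intertwines the action `ρ` with the linear action `L`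
    (∀ g : G, ∀ x ∈ D, ψ (ρ g x) = L g (ψ x)) :=
  bochner_averaging_general D hD_open hD_bdd h0 G μ ρ hρ_cont hρ_one hρ_mul hρ_holo hρ_maps hρ_fix L
    hL ψ hψ
end

section
/- There is no biholomorphism from ℂ × H onto ℍ², where H = {w ∈ ℂ : Im w > 0} is the upper half-plane and ℍ² = {(z,w) ∈ ℂ² : Im w > |z|²}. Consequently, the holomorphic submersion π : ℍ² → ℂ, (z,w) ↦ z, whose fibers are the half-planes {z₀} × {w : Im w > |z₀|²}, is not a holomorphically trivial fiber bundle over ℂ. -/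
open Set

/-- The Siegel domain `ℍ² = {(z, w) ∈ ℂ² : Im w > |z|²}`. -/
def SiegelH2 : Set (ℂ × ℂ) := {p : ℂ × ℂ | ‖p.1‖ ^ 2 < p.2.im}

/-- The upper half-plane `H = {w ∈ ℂ : Im w > 0}`. -/
def UpperHalf : Set ℂ := {w : ℂ | 0 < w.im}

/-- `f` is a biholomorphism from the domain `D` onto the domain `Ω`. -/
def IsBiholOnto {E F : Type*} [NormedAddCommGroup E] [NormedSpace ℂ E]
    [NormedAddCommGroup F] [NormedSpace ℂ F] (D : Set E) (Ω : Set F) (f : E → F) : Prop :=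
  DifferentiableOn ℂ f D ∧ Set.MapsTo f D Ω ∧ Set.InjOn f D ∧ f '' D = Ω ∧
    ∃ finv : F → E, DifferentiableOn ℂ finv Ω ∧
      (∀ z ∈ D, finv (f z) = z) ∧ (∀ w ∈ Ω, f (finv w) = w)

/-!
The line `z ↦ (z, i)` in `ℂ × H` is a copy of `ℂ`, so a holomorphic map `ℂ × H → ℍ²` restricts
to an entire curve in `ℍ²`. Such a curve is constant: its second coordinate takes values in the
upper half-plane, hence is constant by Liouville applied to `1 / (w + i)`, and then its first
coordinate is bounded by `√(Im w)`, hence constant as well. So the map is not injective.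
-/

section Liouville

variable {E : Type*} [NormedAddCommGroup E] [NormedSpace ℂ E]

lemma one_le_norm_add_I {w : ℂ} (hw : 0 ≤ w.im) : 1 ≤ ‖w + Complex.I‖ :=
  calc (1 : ℝ) ≤ (w + Complex.I).im := by simpa using hw
    _ ≤ ‖w + Complex.I‖ := Complex.im_le_norm _

theorem Differentiable.apply_eq_apply_of_im_nonneg {f : E → ℂ} (hf : Differentiable ℂ f)
    (him : ∀ x, 0 ≤ (f x).im) (x y : E) : f x = f y := by
  have hne : ∀ x, f x + Complex.I ≠ 0 := fun x =>
    norm_pos_iff.mp (one_pos.trans_le (one_le_norm_add_I (him x)))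
  have hg : Differentiable ℂ fun x => (f x + Complex.I)⁻¹ := fun x =>
    ((hf x).add_const _).inv (hne x)
  have hbdd : Bornology.IsBounded (range fun x => (f x + Complex.I)⁻¹) := by
    refine isBounded_iff_forall_norm_le.mpr ⟨1, forall_mem_range.mpr fun x => ?_⟩
    rw [norm_inv]
    exact inv_le_one_of_one_le₀ (one_le_norm_add_I (him x))
  simpa using hg.apply_eq_apply_of_bounded hbdd x y

theorem Differentiable.apply_eq_apply_of_mapsTo_siegelH2 {φ : E → ℂ × ℂ}
    (hφ : Differentiable ℂ φ) (hmaps : ∀ x, φ x ∈ SiegelH2) (x y : E) : φ x = φ y := by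
  have hsnd : ∀ x, (φ x).2 = (φ y).2 := fun x =>
    hφ.snd.apply_eq_apply_of_im_nonneg
      (fun x => (sq_nonneg _).trans (hmaps x).le) x y
  have hbdd : Bornology.IsBounded (range fun x => (φ x).1) := by
    refine isBounded_iff_forall_norm_le.mpr
      ⟨√(φ y).2.im, forall_mem_range.mpr fun x => ?_⟩
    have hx : ‖(φ x).1‖ ^ 2 < (φ y).2.im := hsnd x ▸ hmaps x
    exact Real.le_sqrt_of_sq_le hx.le
  exact Prod.ext (hφ.fst.apply_eq_apply_of_bounded hbdd x y) (hsnd x)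

end Liouville

lemma I_mem_upperHalf : Complex.I ∈ UpperHalf := by
  simp [UpperHalf]

lemma DifferentiableOn.differentiable_prodMk_right {f : ℂ × ℂ → ℂ × ℂ}
    (hf : DifferentiableOn ℂ f (univ ×ˢ UpperHalf)) {w : ℂ} (hw : w ∈ UpperHalf) :
    Differentiable ℂ fun z => f (z, w) := by
  have hopen : IsOpen ((univ : Set ℂ) ×ˢ UpperHalf) :=
    isOpen_univ.prod (isOpen_lt continuous_const Complex.continuous_im)
  intro z
  have hmem : (z, w) ∈ univ ×ˢ UpperHalf := ⟨mem_univ z, hw⟩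
  exact ((hf _ hmem).differentiableAt (hopen.mem_nhds hmem)).comp z
    (differentiableAt_id.prodMk (differentiableAt_const w))

theorem not_injOn_prod_upperHalf_of_mapsTo_siegelH2 {f : ℂ × ℂ → ℂ × ℂ}
    (hf : DifferentiableOn ℂ f (univ ×ˢ UpperHalf))
    (hmaps : MapsTo f (univ ×ˢ UpperHalf) SiegelH2) :
    ¬ InjOn f (univ ×ˢ UpperHalf) := by
  intro hinj
  have hmem : ∀ z : ℂ, (z, Complex.I) ∈ univ ×ˢ UpperHalf := fun z =>
    ⟨mem_univ z, I_mem_upperHalf⟩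
  have hconst : f (1, Complex.I) = f (0, Complex.I) :=
    (hf.differentiable_prodMk_right I_mem_upperHalf).apply_eq_apply_of_mapsTo_siegelH2
      (fun z => hmaps (hmem z)) 1 0
  simpa using congrArg Prod.fst (hinj (hmem 1) (hmem 0) hconst)

/-- **Example 4.2.** There is no biholomorphism from `ℂ × H` onto `ℍ²`. Consequently the
holomorphic submersion `π : ℍ² → ℂ`, `(z, w) ↦ z`, whose fibers are the half-planes
`{z₀} × {Im w > |z₀|²}`, is not a holomorphically trivial fiber bundle over `ℂ`: there is
no biholomorphism `ℂ × H → ℍ²` commuting with the projections to `ℂ`. -/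
theorem no_biholomorphism_prod_halfplane_siegel :
    (¬ ∃ f : ℂ × ℂ → ℂ × ℂ, IsBiholOnto ((Set.univ : Set ℂ) ×ˢ UpperHalf) SiegelH2 f) ∧
    (¬ ∃ f : ℂ × ℂ → ℂ × ℂ, IsBiholOnto ((Set.univ : Set ℂ) ×ˢ UpperHalf) SiegelH2 f ∧
      ∀ p ∈ (Set.univ : Set ℂ) ×ˢ UpperHalf, (f p).1 = p.1) := by
  have hno : ¬ ∃ f : ℂ × ℂ → ℂ × ℂ, IsBiholOnto (univ ×ˢ UpperHalf) SiegelH2 f :=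
    fun ⟨_, hdiff, hmaps, hinj, _⟩ =>
      not_injOn_prod_upperHalf_of_mapsTo_siegelH2 hdiff hmaps hinj
  exact ⟨hno, fun ⟨f, hf, _⟩ => hno ⟨f, hf⟩⟩
end
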